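/- For every integer w ≥ 1 and all indices 1 ≤ i ≤ j ≤ n−1, the optimal splitting points are monotone: R(i,j,w) ≤ R(i,j+1,w) ≤ R(i+1,j+1,w). -/

import Mathlib

/-!
By induction on `w` and then on the right endpoint, each level `C(·,·,w)` satisfies the quadrangle
inequality `C(a,c,w) + C(b,d,w) ≤ C(a,d,w) + C(b,c,w)` for `a ≤ b ≤ c ≤ d`: split `[a,d]` and
`[b,c]` at optimal points and exchange the right parts, which gives admissible splits of `[a,c]`
and `[b,d]`. The degenerate case `b = c` is the inequality `C(a,b,w) + C(b,d,w) ≤ C(a,d,w)`,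
whose proof needs that `C` decreases in `w`.

The quadrangle inequality makes the difference between the objectives of two neighbouring problems
monotone in the split point. So if the largest optimal split of one problem lay to the left of an
optimal split of its neighbour, the latter would be optimal for the first problem too. Only the
optimal value of the neighbour is cancelled in this exchange, and it is finite as soon as `w ≥ 1`.
-/

open scoped ENNReal NNReal BigOperators
open Finset

theorem Finset.sum_Icc_add_sum_Icc {M : Type*} [AddCommMonoid M] (f : ℕ → M) {a b c d : ℕ}
    (hab : a ≤ b) (hbc : b ≤ c + 1) (hcd : c ≤ d) :
    ∑ k ∈ Icc a c, f k + ∑ k ∈ Icc b d, f k = ∑ k ∈ Icc a d, f k + ∑ k ∈ Icc b c, f k := by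
  have hunion : Icc a c ∪ Icc b d = Icc a d := by ext; simp only [mem_union, mem_Icc]; omega
  have hinter : Icc a c ∩ Icc b d = Icc b c := by ext; simp only [mem_inter, mem_Icc]; omega
  rw [← sum_union_inter, hunion, hinter]

theorem ENNReal.le_of_add_le_add_of_le {a a' b b' : ℝ≥0∞} (ha : a ≠ ⊤) (haa' : a ≤ a')
    (h : b + a' ≤ b' + a) : b ≤ b' :=
  ENNReal.le_of_add_le_add_right ha ((add_le_add_right haa' b).trans h)

noncomputable def intervalSum (p : ℕ → ℝ≥0) (i j : ℕ) : ℝ≥0∞ := ∑ k ∈ Icc i j, (p k : ℝ≥0∞)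

theorem intervalSum_mono (p : ℕ → ℝ≥0) {i j i' j' : ℕ} (hi : i' ≤ i) (hj : j ≤ j') :
    intervalSum p i j ≤ intervalSum p i' j' :=
  sum_le_sum_of_subset (Icc_subset_Icc hi hj)

theorem intervalSum_ne_top (p : ℕ → ℝ≥0) (i j : ℕ) : intervalSum p i j ≠ ⊤ :=
  ENNReal.sum_ne_top.2 fun _ _ => ENNReal.coe_ne_top

def splitCost (C : ℕ → ℕ → ℕ → ℝ≥0∞) (i j w k : ℕ) : ℝ≥0∞ := C i (k - 1) w + C k j (w - 1)

structure IsSplitCostTable (n : ℕ) (p : ℕ → ℝ≥0) (C : ℕ → ℕ → ℕ → ℝ≥0∞) : Prop where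
  diag : ∀ i w : ℕ, 1 ≤ i → i ≤ n → C i i w = 0
  zero : ∀ i j : ℕ, 1 ≤ i → i < j → j ≤ n → C i j 0 = ⊤
  recurrence : ∀ i j w : ℕ, 1 ≤ i → i < j → j ≤ n → 1 ≤ w →
    C i j w = intervalSum p i j + ⨅ k ∈ Ioc i j, splitCost C i j w k

namespace IsSplitCostTable

variable {n : ℕ} {p : ℕ → ℝ≥0} {C : ℕ → ℕ → ℕ → ℝ≥0∞}

theorem le_intervalSum_add_splitCost (hC : IsSplitCostTable n p C) {i j w k : ℕ} (hi : 1 ≤ i)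
    (hjn : j ≤ n) (hw : 1 ≤ w) (hk : k ∈ Ioc i j) :
    C i j w ≤ intervalSum p i j + splitCost C i j w k := by
  rw [hC.recurrence i j w hi ((mem_Ioc.1 hk).1.trans_le (mem_Ioc.1 hk).2) hjn hw]
  gcongr
  exact iInf₂_le k hk

theorem exists_eq_intervalSum_add_splitCost (hC : IsSplitCostTable n p C) {i j w : ℕ}
    (hi : 1 ≤ i) (hij : i < j) (hjn : j ≤ n) (hw : 1 ≤ w) :
    ∃ k ∈ Ioc i j, C i j w = intervalSum p i j + splitCost C i j w k := by
  obtain ⟨k, hk, hmin⟩ := (Ioc i j).exists_min_image (splitCost C i j w) (nonempty_Ioc.2 hij)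
  refine ⟨k, hk, ?_⟩
  rw [hC.recurrence i j w hi hij hjn hw, le_antisymm (iInf₂_le k hk) (le_iInf₂ hmin)]

theorem ne_top (hC : IsSplitCostTable n p C) {i j w : ℕ} (hi : 1 ≤ i) (hij : i ≤ j)
    (hjn : j ≤ n) (hw : 1 ≤ w) : C i j w ≠ ⊤ := by
  induction j with
  | zero => omega
  | succ j ih =>
    rcases hij.eq_or_lt with rfl | hij
    · simp [hC.diag _ w hi hjn]
    have hle := hC.le_intervalSum_add_splitCost hi hjn hw (mem_Ioc.2 ⟨by omega, le_rfl⟩)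
    rw [splitCost, Nat.add_sub_cancel, hC.diag (j + 1) _ (by omega) hjn, add_zero] at hle
    exact ne_top_of_le_ne_top
      (ENNReal.add_ne_top.2 ⟨intervalSum_ne_top p i _, ih (by omega) (by omega)⟩) hle

theorem splitCost_ne_top_of_le (hC : IsSplitCostTable n p C) {i j w k : ℕ} (hi : 1 ≤ i)
    (hij : i < j) (hjn : j ≤ n) (hw : 1 ≤ w) (hk : splitCost C i j w k ≤ splitCost C i j w j) :
    splitCost C i j w k ≠ ⊤ := by
  refine ne_top_of_le_ne_top ?_ hk
  rw [splitCost, hC.diag j _ (by omega) hjn, add_zero]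
  exact hC.ne_top hi (by omega) (by omega) hw

theorem antitone (hC : IsSplitCostTable n p C) {i j : ℕ} (hi : 1 ≤ i) (hij : i ≤ j)
    (hjn : j ≤ n) : Antitone (C i j) := by
  refine antitone_nat_of_succ_le fun w => ?_
  induction w generalizing i j with
  | zero =>
    rcases hij.eq_or_lt with rfl | hij
    · rw [hC.diag i _ hi hjn, hC.diag i _ hi hjn]
    · simp [hC.zero i j hi hij hjn]
  | succ w ihw =>
    induction j using Nat.strong_induction_on with
    | _ j ihj =>
    rcases hij.eq_or_lt with rfl | hij
    · rw [hC.diag i _ hi hjn, hC.diag i _ hi hjn]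
    rw [hC.recurrence i j _ hi hij hjn (by omega), hC.recurrence i j _ hi hij hjn (by omega)]
    gcongr with k hk
    obtain ⟨hik, hkj⟩ := mem_Ioc.1 hk
    simp only [splitCost, Nat.add_sub_cancel]
    gcongr
    exacts [ihj _ (by omega) (by omega) (by omega), ihw (by omega) hkj hjn]

theorem add_le (hC : IsSplitCostTable n p C) (w : ℕ) {a b d : ℕ} (ha : 1 ≤ a) (hab : a ≤ b)
    (hbd : b ≤ d) (hdn : d ≤ n) : C a b w + C b d w ≤ C a d w := by
  rcases hab.eq_or_lt with rfl | hab
  · rw [hC.diag a w ha (by omega), zero_add]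
  rcases hbd.eq_or_lt with rfl | hbd
  · rw [hC.diag b w (by omega) hdn, add_zero]
  clear ‹a ≤ b› ‹b ≤ d›
  induction w generalizing a b d with
  | zero => simp [hC.zero a d ha (hab.trans hbd) hdn]
  | succ w ihw =>
  induction d using Nat.strong_induction_on generalizing a b with
  | _ d ihd =>
  obtain ⟨r, hr, hCr⟩ :=
    hC.exists_eq_intervalSum_add_splitCost (w := w + 1) ha (hab.trans hbd) hdn (by omega)
  obtain ⟨har, hrd⟩ := mem_Ioc.1 hr
  rw [hCr, splitCost, Nat.add_sub_cancel]
  rcases le_or_gt r b with hrb | hbr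
  · have hCab := hC.le_intervalSum_add_splitCost (w := w + 1) ha (by omega) (by omega)
      (mem_Ioc.2 ⟨har, hrb⟩)
    rw [splitCost, Nat.add_sub_cancel] at hCab
    calc C a b (w + 1) + C b d (w + 1)
        ≤ intervalSum p a b + (C a (r - 1) (w + 1) + C r b w) + C b d w :=
          add_le_add hCab (hC.antitone (by omega) hbd.le hdn (Nat.le_succ w))
      _ = intervalSum p a b + C a (r - 1) (w + 1) + (C r b w + C b d w) := by ring
      _ ≤ intervalSum p a d + C a (r - 1) (w + 1) + C r d w := by
          gcongr
          · exact intervalSum_mono p le_rfl hbd.le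
          · rcases hrb.eq_or_lt with rfl | hrb
            · rw [hC.diag r w (by omega) (by omega), zero_add]
            · exact ihw (by omega) hdn hrb hbd
      _ = _ := by ring
  · have hCbd := hC.le_intervalSum_add_splitCost (w := w + 1) (by omega) hdn (by omega)
      (mem_Ioc.2 ⟨hbr, hrd⟩)
    rw [splitCost, Nat.add_sub_cancel] at hCbd
    calc C a b (w + 1) + C b d (w + 1)
        ≤ C a b (w + 1) + (intervalSum p b d + (C b (r - 1) (w + 1) + C r d w)) := by gcongr
      _ = intervalSum p b d + ((C a b (w + 1) + C b (r - 1) (w + 1)) + C r d w) := by ring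
      _ ≤ intervalSum p a d + (C a (r - 1) (w + 1) + C r d w) := by
          gcongr
          · exact intervalSum_mono p hab.le le_rfl
          · rcases (Nat.le_sub_one_of_lt hbr).eq_or_lt with hb | hb
            · rw [← hb, hC.diag b _ (by omega) (by omega), add_zero]
            · exact ihd (r - 1) (by omega) ha (by omega) hab hb

theorem add_le_add_of_splitCost_le (hC : IsSplitCostTable n p C) {w a b c d k₁ k₂ r₁ r₂ : ℕ}
    (ha : 1 ≤ a) (hab : a ≤ b) (hbc : b ≤ c) (hcd : c ≤ d) (hdn : d ≤ n) (hw : 1 ≤ w)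
    (hk₁ : k₁ ∈ Ioc a c) (hk₂ : k₂ ∈ Ioc b d)
    (hr₁ : C a d w = intervalSum p a d + splitCost C a d w r₁)
    (hr₂ : C b c w = intervalSum p b c + splitCost C b c w r₂)
    (h : splitCost C a c w k₁ + splitCost C b d w k₂ ≤
      splitCost C a d w r₁ + splitCost C b c w r₂) :
    C a c w + C b d w ≤ C a d w + C b c w :=
  calc C a c w + C b d w
      ≤ (intervalSum p a c + splitCost C a c w k₁) + (intervalSum p b d + splitCost C b d w k₂) :=
        add_le_add (hC.le_intervalSum_add_splitCost ha (hcd.trans hdn) hw hk₁)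
          (hC.le_intervalSum_add_splitCost (ha.trans hab) hdn hw hk₂)
    _ = (intervalSum p a c + intervalSum p b d) + (splitCost C a c w k₁ + splitCost C b d w k₂) :=
        add_add_add_comm ..
    _ ≤ (intervalSum p a d + intervalSum p b c) + (splitCost C a d w r₁ + splitCost C b c w r₂) :=
        add_le_add (sum_Icc_add_sum_Icc _ hab (by omega) hcd).le h
    _ = C a d w + C b c w := by rw [hr₁, hr₂]; ring

theorem quadrangle (hC : IsSplitCostTable n p C) (w : ℕ) {a b c d : ℕ} (ha : 1 ≤ a)
    (hab : a ≤ b) (hbc : b ≤ c) (hcd : c ≤ d) (hdn : d ≤ n) :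
    C a c w + C b d w ≤ C a d w + C b c w := by
  induction w generalizing a b c d with
  | zero =>
    rcases (hab.trans (hbc.trans hcd)).eq_or_lt with rfl | had
    · obtain ⟨rfl, rfl⟩ : b = a ∧ c = a := by omega
      rfl
    · simp [hC.zero a d ha had hdn]
  | succ w ihw =>
  induction d using Nat.strong_induction_on generalizing a b c with
  | _ d ihd =>
  rcases hab.eq_or_lt with rfl | hab
  · rw [add_comm]
  rcases hcd.eq_or_lt with rfl | hcd
  · rfl
  rcases hbc.eq_or_lt with rfl | hbc
  · rw [hC.diag b _ (by omega) (by omega), add_zero]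
    exact hC.add_le _ ha hab.le hcd.le hdn
  obtain ⟨r₁, hr₁, hCr₁⟩ :=
    hC.exists_eq_intervalSum_add_splitCost (w := w + 1) ha (by omega) hdn (by omega)
  obtain ⟨r₂, hr₂, hCr₂⟩ :=
    hC.exists_eq_intervalSum_add_splitCost (w := w + 1) (by omega) hbc (by omega) (by omega)
  rw [mem_Ioc] at hr₁ hr₂
  rcases le_total r₁ r₂ with hr | hr
  · refine hC.add_le_add_of_splitCost_le ha hab.le hbc.le hcd.le hdn (by omega)
      (mem_Ioc.2 ⟨hr₁.1, by omega⟩) (mem_Ioc.2 ⟨hr₂.1, by omega⟩) hCr₁ hCr₂ ?_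
    simp only [splitCost, Nat.add_sub_cancel]
    convert add_le_add_left (ihw (by omega) hr hr₂.2 hcd.le hdn)
      (C a (r₁ - 1) (w + 1) + C b (r₂ - 1) (w + 1)) using 1 <;> ring
  · refine hC.add_le_add_of_splitCost_le ha hab.le hbc.le hcd.le hdn (by omega)
      (mem_Ioc.2 ⟨by omega, hr₂.2⟩) (mem_Ioc.2 ⟨by omega, hr₁.2⟩) hCr₁ hCr₂ ?_
    simp only [splitCost, Nat.add_sub_cancel]
    convert add_le_add_left
      (ihd (r₁ - 1) (by omega) (c := r₂ - 1) ha hab.le (by omega) (by omega) (by omega))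
      (C r₁ d w + C r₂ c w) using 1 <;> ring

theorem splitCost_exchange_right (hC : IsSplitCostTable n p C) {i j j' w s r : ℕ} (hs : 1 ≤ s)
    (hsr : s ≤ r) (hrj : r ≤ j) (hjj' : j ≤ j') (hj'n : j' ≤ n) :
    splitCost C i j' w r + splitCost C i j w s ≤ splitCost C i j' w s + splitCost C i j w r := by
  unfold splitCost
  convert add_le_add_left (hC.quadrangle (w - 1) hs hsr hrj hjj' hj'n)
    (C i (r - 1) w + C i (s - 1) w) using 1 <;> ring

theorem splitCost_exchange_left (hC : IsSplitCostTable n p C) {i i' j w s r : ℕ} (hi : 1 ≤ i)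
    (hii' : i ≤ i') (hi's : i' < s) (hsr : s ≤ r) (hrn : r ≤ n) :
    splitCost C i' j w r + splitCost C i j w s ≤ splitCost C i' j w s + splitCost C i j w r := by
  unfold splitCost
  convert add_le_add_left (hC.quadrangle w hi hii' (Nat.le_sub_one_of_lt hi's)
    (Nat.sub_le_sub_right hsr 1) (by omega)) (C r j (w - 1) + C s j (w - 1)) using 1 <;> ring

end IsSplitCostTable

/-- **Theorem 1 (monotonicity of the optimal split points).** For every `w ≥ 1` and all
`1 ≤ i ≤ j ≤ n - 1`, it holds that `R(i,j,w) ≤ R(i,j+1,w) ≤ R(i+1,j+1,w)`, where for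
`i < j`, `R(i,j,w)` is the largest index `k` with `i < k ≤ j` achieving the minimum of
`C(i,k-1,w) + C(k,j,w-1)`, and `R(i,i,w) = i`.
Here `C(i,i,w) = 0`, `C(i,j,0) = ∞` for `i < j`, and for `i < j`, `w ≥ 1`,
`C(i,j,w) = (p_i + ⋯ + p_j) + min_{i < k ≤ j} (C(i,k-1,w) + C(k,j,w-1))`. -/
theorem monotonicity_of_roots
    (n : ℕ) (p : ℕ → ℝ≥0)
    (C : ℕ → ℕ → ℕ → ℝ≥0∞)
    (hdiag : ∀ i w : ℕ, 1 ≤ i → i ≤ n → C i i w = 0)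
    (hzero : ∀ i j : ℕ, 1 ≤ i → i < j → j ≤ n → C i j 0 = ⊤)
    (hrec : ∀ i j w : ℕ, 1 ≤ i → i < j → j ≤ n → 1 ≤ w →
      C i j w = (∑ k ∈ Finset.Icc i j, (p k : ℝ≥0∞)) +
        ⨅ k ∈ Finset.Ioc i j, (C i (k - 1) w + C k j (w - 1)))
    (R : ℕ → ℕ → ℕ → ℕ)
    (hRdiag : ∀ i w : ℕ, 1 ≤ i → i ≤ n → R i i w = i)
    (hR : ∀ i j w : ℕ, 1 ≤ i → i < j → j ≤ n → 1 ≤ w →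
      i < R i j w ∧ R i j w ≤ j ∧
      (∀ k : ℕ, i < k → k ≤ j →
        C i (R i j w - 1) w + C (R i j w) j (w - 1) ≤ C i (k - 1) w + C k j (w - 1)) ∧
      (∀ k : ℕ, i < k → k ≤ j →
        C i (k - 1) w + C k j (w - 1) ≤ C i (R i j w - 1) w + C (R i j w) j (w - 1) →
        k ≤ R i j w)) :
    ∀ w : ℕ, 1 ≤ w → ∀ i j : ℕ, 1 ≤ i → i ≤ j → j + 1 ≤ n →
      R i j w ≤ R i (j + 1) w ∧ R i (j + 1) w ≤ R (i + 1) (j + 1) w := by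
  have hC : IsSplitCostTable n p C := ⟨hdiag, hzero, hrec⟩
  intro w hw i j hi hij hjn
  rcases hij.eq_or_lt with rfl | hij
  · have := hR i (i + 1) w hi (by omega) hjn hw
    rw [hRdiag i w hi (by omega), hRdiag (i + 1) w (by omega) hjn]
    omega
  obtain ⟨hr₁, hr₂, hr_opt, -⟩ := hR i j w hi hij (by omega) hw
  obtain ⟨hs₁, hs₂, hs_opt, hs_max⟩ := hR i (j + 1) w hi (by omega) hjn hw
  obtain ⟨ht₁, -, -, ht_max⟩ := hR (i + 1) (j + 1) w (by omega) (by omega) hjn hw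
  constructor
  · by_contra! hlt
    refine hlt.not_ge (hs_max _ hr₁ (by omega) ?_)
    exact ENNReal.le_of_add_le_add_of_le
      (hC.splitCost_ne_top_of_le hi hij (by omega) hw (hr_opt j hij le_rfl))
      (hr_opt _ hs₁ (by omega))
      (hC.splitCost_exchange_right (by omega) hlt.le hr₂ (by omega) hjn)
  · by_contra! hlt
    refine hlt.not_ge (ht_max _ (by omega) hs₂ ?_)
    exact ENNReal.le_of_add_le_add_of_le
      (hC.splitCost_ne_top_of_le hi (by omega) hjn hw (hs_opt _ (by omega) le_rfl))
      (hs_opt _ (by omega) (by omega))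
      (hC.splitCost_exchange_left hi (by omega) ht₁ hlt.le (by omega))
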